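/- arXiv:1110.2797 — 2 statements merged into one kernel-verified Lean document; each statement's English description precedes it below -/
import Mathlib

section
/- Let q be an odd prime, F = ℤ/qℤ, and let χ be a multiplicative character on F× extended by χ(0)=0. Let ε = (-1/q). Then the sum over all symmetric 2×2 matrices Y over F of χ(det Y) equals: q²(q-1) if χ is trivial; ε q(q-1) if χ² is trivial but χ is nontrivial; and 0 if χ² is nontrivial. -/
open Matrix

variable {q : ℕ} [Fact q.Prime]

lemma symm_sum_eq (χ : MulChar (ZMod q) ℂ) :
    ∑ Y ∈ Finset.univ.filter
        (fun Y : Matrix (Fin 2) (Fin 2) (ZMod q) => Yᵀ = Y),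
      χ Y.det
    = ∑ p : ZMod q × ZMod q × ZMod q, χ (p.1 * p.2.2 - p.2.1 * p.2.1) := by
  refine Finset.sum_nbij' (i := fun Y => (Y 0 0, Y 0 1, Y 1 1))
    (j := fun p => !![p.1, p.2.1; p.2.1, p.2.2]) ?_ ?_ ?_ ?_ ?_
  · intro a _; exact Finset.mem_univ _
  · intro p _
    simp only [Finset.mem_filter, Finset.mem_univ, true_and]
    ext i j
    fin_cases i <;> fin_cases j <;> simp
  · intro Y hY
    simp only [Finset.mem_filter, Finset.mem_univ, true_and] at hY
    have h10 : Y 1 0 = Y 0 1 := by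
      conv_lhs => rw [← hY]
      rfl
    ext i j
    fin_cases i <;> fin_cases j <;> simp [h10]
  · intro p _; rfl
  · intro Y hY
    simp only [Finset.mem_filter, Finset.mem_univ, true_and] at hY
    have h10 : Y 1 0 = Y 0 1 := by
      conv_lhs => rw [← hY]
      rfl
    rw [Matrix.det_fin_two]
    simp [h10]

lemma triple_sum (χ : MulChar (ZMod q) ℂ) :
    ∑ p : ZMod q × ZMod q × ZMod q, χ (p.1 * p.2.2 - p.2.1 * p.2.1)
    = (q:ℂ) * (q - 1) * (∑ t : ZMod q, χ t)
      + (q:ℂ) * χ (-1) * (∑ b : ZMod q, (χ^2) b) := by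
  have inner : ∀ a b : ZMod q, a ≠ 0 →
      ∑ d : ZMod q, χ (a * d - b * b) = ∑ t : ZMod q, χ t := by
    intro a b ha
    have h1 : Function.Bijective (fun d : ZMod q => a * d) :=
      mulLeft_bijective₀ a ha
    have h2 : Function.Bijective (fun x : ZMod q => x - b * b) :=
      (Equiv.subRight (b*b)).bijective
    refine Finset.sum_bijective (fun d => a * d - b * b)
      (h2.comp h1) ?_ (fun _ _ => rfl)
    simp
  have hq : (1:ℕ) ≤ q := (Fact.out : q.Prime).one_lt.le
  simp only [Fintype.sum_prod_type]
  rw [Finset.sum_eq_sum_sdiff_singleton_add (Finset.mem_univ (0 : ZMod q))]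
  have hA : ∀ a : ZMod q, a ≠ 0 →
      (∑ b : ZMod q, ∑ d : ZMod q, χ (a*d - b*b)) = (q:ℂ) * ∑ t, χ t := by
    intro a ha
    rw [Finset.sum_congr rfl (fun b _ => inner a b ha), Finset.sum_const,
      Finset.card_univ, ZMod.card, nsmul_eq_mul]
  have key : ∀ b d : ZMod q, χ ((0:ZMod q)*d - b*b) = χ (-1) * (χ^2) b := by
    intro b d
    rw [zero_mul, zero_sub, ← neg_one_mul, _root_.map_mul]
    congr 1
    simp [pow_two]
  have h0 : (∑ b : ZMod q, ∑ d : ZMod q, χ ((0:ZMod q)*d - b*b))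
      = (q:ℂ) * χ (-1) * ∑ b, (χ^2) b := by
    simp only [key, Finset.sum_const, Finset.card_univ, ZMod.card, nsmul_eq_mul,
      Finset.mul_sum]
    exact Finset.sum_congr rfl (fun b _ => by ring)
  rw [h0, Finset.sum_congr rfl (fun a ha => hA a (by
    simpa using (Finset.mem_sdiff.mp ha).2)), Finset.sum_const,
    Finset.card_sdiff_of_subset (by simp), Finset.card_univ, ZMod.card,
    Finset.card_singleton, nsmul_eq_mul, Nat.cast_sub hq, Nat.cast_one]
  ring

lemma sum_triv : ∑ t : ZMod q, (1 : MulChar (ZMod q) ℂ) t = (q:ℂ) - 1 := by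
  have hq : (1:ℕ) ≤ q := (Fact.out : q.Prime).one_lt.le
  rw [Finset.sum_eq_sum_sdiff_singleton_add (Finset.mem_univ (0 : ZMod q)),
    MulChar.map_nonunit _ (by simp), add_zero,
    Finset.sum_congr rfl (fun t ht => MulChar.one_apply
      (isUnit_iff_ne_zero.mpr (by simpa using (Finset.mem_sdiff.mp ht).2))),
    Finset.sum_const, Finset.card_sdiff_of_subset (by simp), Finset.card_univ, ZMod.card,
    Finset.card_singleton, nsmul_eq_mul, Nat.cast_sub hq, Nat.cast_one, mul_one]

lemma chi_sq_one {χ : MulChar (ZMod q) ℂ} (h2 : χ^2 = 1) :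
    ∀ x : ZMod q, x ≠ 0 → χ (x * x) = 1 := by
  intro x hx
  have h : χ (x * x) = (χ^2) x := by simp [pow_two]
  rw [h, h2, MulChar.one_apply (isUnit_iff_ne_zero.mpr hx)]

lemma chi_neg_one {χ : MulChar (ZMod q) ℂ} (h2 : χ^2 = 1) (hne : χ ≠ 1) :
    χ (-1) = (legendreSym q (-1) : ℂ) := by
  have hne0 : (-1 : ZMod q) ≠ 0 := by
    simpa using (neg_ne_zero.mpr (one_ne_zero : (1 : ZMod q) ≠ 0))
  have hZ : (((-1 : ℤ)) : ZMod q) ≠ 0 := by push_cast; exact hne0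
  by_cases hs : IsSquare (-1 : ZMod q)
  · obtain ⟨y, hy⟩ := hs
    have hy0 : y ≠ 0 := by rintro rfl; rw [mul_zero] at hy; exact hne0 hy
    rw [hy, chi_sq_one h2 y hy0,
      (legendreSym.eq_one_iff q hZ).mpr (by push_cast; exact ⟨y, hy⟩)]
    simp
  · have hleg : legendreSym q (-1) = -1 :=
      (legendreSym.eq_neg_one_iff q).mpr (by push_cast; exact hs)
    rw [hleg]
    have hpm : χ (-1) = 1 ∨ χ (-1) = -1 := by
      have h : χ (-1) * χ (-1) = 1 := by
        rw [← _root_.map_mul]; exact chi_sq_one h2 (-1) hne0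
      exact mul_self_eq_one_iff.mp h
    rcases hpm with h1 | h1
    · exfalso; apply hne
      rw [MulChar.eq_one_iff]
      intro u
      by_cases hu : IsSquare ((u : ZMod q))
      · obtain ⟨y, hy⟩ := hu
        have hy0 : y ≠ 0 := by
          rintro rfl; rw [mul_zero] at hy; exact u.ne_zero hy
        rw [hy, chi_sq_one h2 y hy0]
      · have hu0 : (u : ZMod q) ≠ 0 := u.ne_zero
        have hqc : quadraticChar (ZMod q) (-(u : ZMod q)) = 1 := by
          rw [← neg_one_mul, _root_.map_mul,
            quadraticChar_neg_one_iff_not_isSquare.mpr hs,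
            quadraticChar_neg_one_iff_not_isSquare.mpr hu]
          ring
        obtain ⟨y, hy⟩ :=
          (quadraticChar_one_iff_isSquare (neg_ne_zero.mpr hu0)).mp hqc
        have hy0 : y ≠ 0 := by
          rintro rfl; rw [mul_zero] at hy
          exact hu0 (by simpa using congrArg Neg.neg hy)
        have hu' : (u : ZMod q) = -1 * (y * y) := by rw [← hy]; ring
        rw [hu', _root_.map_mul, h1, chi_sq_one h2 y hy0]; ring
    · rw [h1]; simp

theorem stmt6 (q : ℕ) [Fact q.Prime] (hodd : Odd q)
    (χ : MulChar (ZMod q) ℂ) :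
    (χ = 1 →
      ∑ Y ∈ Finset.univ.filter
          (fun Y : Matrix (Fin 2) (Fin 2) (ZMod q) => Yᵀ = Y),
        χ Y.det = (q : ℂ)^2 * (q - 1)) ∧
    (χ^2 = 1 → χ ≠ 1 →
      ∑ Y ∈ Finset.univ.filter
          (fun Y : Matrix (Fin 2) (Fin 2) (ZMod q) => Yᵀ = Y),
        χ Y.det = (legendreSym q (-1) : ℂ) * q * (q - 1)) ∧
    (χ^2 ≠ 1 →
      ∑ Y ∈ Finset.univ.filter
          (fun Y : Matrix (Fin 2) (Fin 2) (ZMod q) => Yᵀ = Y),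
        χ Y.det = 0) := by
  refine ⟨?_, ?_, ?_⟩
  · rintro rfl
    rw [symm_sum_eq, triple_sum, one_pow, sum_triv,
      MulChar.one_apply (IsUnit.neg isUnit_one)]
    ring
  · intro h2 hne
    rw [symm_sum_eq, triple_sum, MulChar.sum_eq_zero_of_ne_one hne, h2,
      sum_triv, chi_neg_one h2 hne]
    ring
  · intro h2
    have hne : χ ≠ 1 := by rintro rfl; exact h2 (one_pow 2)
    rw [symm_sum_eq, triple_sum, MulChar.sum_eq_zero_of_ne_one hne,
      MulChar.sum_eq_zero_of_ne_one h2]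
    ring
end

section
/- Conversely, every coprime symmetric pair (M N) of 2×2 integer matrices can be completed to a matrix [[A,B],[M,N]] ∈ Sp₄(ℤ) for suitable integer matrices A, B. -/
/-!
Write `P = (M N)`. If `P` has rank 2 modulo every prime, no prime divides all of its `2 × 2`
minors, so some integral combination `∑ c s t (P₀ₛ P₁ₜ - P₁ₛ P₀ₜ)` of them equals `1`; with
`G = P c Pᵀ` this says `G - Gᵀ = [[0, 1], [-1, 0]]`, and `(c - cᵀ) Pᵀ [[0, -1], [1, 0]]` is a right
inverse of `P`. Its two blocks give `A₀, B₀` with `A₀ Nᵀ - B₀ Mᵀ = 1`. Replacing `(A₀, B₀)` by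
`(A₀ + T M, B₀ + T N)` keeps this identity (as `M Nᵀ` is symmetric) and changes the alternating
matrix `A₀ B₀ᵀ - B₀ A₀ᵀ` by `Tᵀ - T`, so the strictly upper triangular part `T` of it makes
`A Bᵀ` symmetric, which is exactly what `[[A, B], [M, N]] ∈ Sp₄(ℤ)` requires.
-/

open Matrix

/-- The standard symplectic form matrix `J = [[0,I₂],[-I₂,0]]`. -/
def Jmat : Matrix (Fin 2 ⊕ Fin 2) (Fin 2 ⊕ Fin 2) ℤ :=
  Matrix.fromBlocks 0 1 (-1) 0

/-- `γ ∈ Sp₄(ℤ)`. -/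
def IsSp4 (γ : Matrix (Fin 2 ⊕ Fin 2) (Fin 2 ⊕ Fin 2) ℤ) : Prop :=
  γᵀ * Jmat * γ = Jmat

/-- The 2×4 matrix `(M N)` reduced mod `p`. -/
def concatMod (p : ℕ) (M N : Matrix (Fin 2) (Fin 2) ℤ) :
    Matrix (Fin 2) (Fin 2 ⊕ Fin 2) (ZMod p) :=
  Matrix.of fun i => Sum.elim (fun j => ((M i j : ℤ) : ZMod p))
    (fun j => ((N i j : ℤ) : ZMod p))

theorem Int.exists_sum_mul_eq_one_of_forall_prime {ι : Type*} [Fintype ι] (f : ι → ℤ)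
    (h : ∀ p : ℕ, p.Prime → ∃ i, ¬ (p : ℤ) ∣ f i) : ∃ c : ι → ℤ, ∑ i, c i * f i = 1 := by
  suffices Ideal.span (Set.range f) = ⊤ from
    Ideal.mem_span_range_iff_exists_fun.1 (this ▸ Submodule.mem_top)
  by_contra hI
  obtain ⟨m, hm, hle⟩ := Ideal.exists_le_maximal _ hI
  obtain ⟨a, rfl⟩ := Submodule.IsPrincipal.principal m
  have ha : a ≠ 0 := by
    rintro rfl
    exact Ring.ne_bot_of_isMaximal_of_not_isField hm Int.not_isField (by simp)
  have ha_prime : Prime a := (Ideal.span_singleton_prime ha).1 hm.isPrime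
  obtain ⟨i, hi⟩ := h a.natAbs (Int.prime_iff_natAbs_prime.1 ha_prime)
  exact hi (Int.natAbs_dvd.2 (Ideal.mem_span_singleton.1 (hle (Ideal.subset_span ⟨i, rfl⟩))))

namespace Matrix

variable {R n : Type*}

theorem exists_minor_ne_zero_of_rank_eq_two [Field R] [Fintype n]
    (A : Matrix (Fin 2) n R) (hA : A.rank = 2) :
    ∃ s t, A 0 s * A 1 t - A 1 s * A 0 t ≠ 0 := by
  have hli : LinearIndependent R A.row := by
    rw [linearIndependent_iff_card_eq_finrank_span, Set.finrank, ← rank_eq_finrank_span_row, hA]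
    rfl
  obtain ⟨s, hs⟩ := Function.ne_iff.1 (hli.ne_zero 0)
  by_contra! hminor
  have hdep := Fintype.linearIndependent_iff.1 hli ![A 1 s, -A 0 s] <| by
    ext t
    simp only [Fin.sum_univ_two, Fin.isValue, cons_val_zero, cons_val_one, Pi.add_apply,
      Pi.smul_apply, row_apply, smul_eq_mul, neg_mul, Pi.zero_apply]
    linear_combination -hminor s t
  exact hs (by simpa using hdep 1)

theorem exists_mul_eq_one_of_sum_mul_minor_eq_one [CommRing R] [Fintype n]
    (P : Matrix (Fin 2) n R) (c : n → n → R)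
    (hc : ∑ s, ∑ t, c s t * (P 0 s * P 1 t - P 1 s * P 0 t) = 1) :
    ∃ Q : Matrix n (Fin 2) R, P * Q = 1 := by
  set G := P * of c * Pᵀ
  have hG : G - Gᵀ = !![0, 1; -1, 0] := by
    have h01 : G 0 1 - G 1 0 = 1 := by
      rw [← hc]
      simp only [G, mul_apply, transpose_apply, of_apply, Finset.sum_mul,
        ← Finset.sum_sub_distrib]
      rw [Finset.sum_comm]
      exact Finset.sum_congr rfl fun s _ => Finset.sum_congr rfl fun t _ => by ring
    ext i j
    fin_cases i <;> fin_cases j <;> simp [h01]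
    linear_combination -h01
  let E : Matrix (Fin 2) (Fin 2) R := !![0, -1; 1, 0]
  refine ⟨(of c - (of c)ᵀ) * Pᵀ * E, ?_⟩
  have hGt : Gᵀ = P * (of c)ᵀ * Pᵀ := by simp [G, transpose_mul, Matrix.mul_assoc]
  calc P * ((of c - (of c)ᵀ) * Pᵀ * E) = (G - Gᵀ) * E := by
        rw [hGt]; simp only [G, Matrix.sub_mul, Matrix.mul_sub, Matrix.mul_assoc]
    _ = 1 := by
      rw [hG]
      ext i j
      fin_cases i <;> fin_cases j <;> simp [E]

theorem exists_mul_eq_one_of_forall_rank_map_eq_two [Fintype n] (P : Matrix (Fin 2) n ℤ)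
    (hP : ∀ p : ℕ, p.Prime → (P.map ((↑) : ℤ → ZMod p)).rank = 2) :
    ∃ Q : Matrix n (Fin 2) ℤ, P * Q = 1 := by
  obtain ⟨c, hc⟩ := Int.exists_sum_mul_eq_one_of_forall_prime
    (fun st : n × n => P 0 st.1 * P 1 st.2 - P 1 st.1 * P 0 st.2) fun p hp => by
      have := Fact.mk hp
      obtain ⟨s, t, hst⟩ := exists_minor_ne_zero_of_rank_eq_two _ (hP p hp)
      refine ⟨(s, t), fun hdvd => hst ?_⟩
      simpa using (ZMod.intCast_zmod_eq_zero_iff_dvd _ p).2 hdvd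
  exact P.exists_mul_eq_one_of_sum_mul_minor_eq_one (fun s t => c (s, t))
    (by rw [← hc, Fintype.sum_prod_type])

theorem exists_sub_transpose_eq [AddGroup R] [LinearOrder n] (S : Matrix n n R) (hS : Sᵀ = -S)
    (hdiag : ∀ i, S i i = 0) : ∃ T : Matrix n n R, T - Tᵀ = S := by
  refine ⟨of fun i j => if i < j then S i j else 0, ?_⟩
  ext i j
  rcases lt_trichotomy i j with hij | rfl | hji
  · simp [hij, hij.not_gt]
  · simp [hdiag]
  · have : S j i = -S i j := by simpa using congr_fun (congr_fun hS i) j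
    simp [hji, hji.not_gt, this]

variable [CommRing R] [Fintype n]

theorem mul_transpose_sub_mul_transpose_apply_self (A B : Matrix n n R) (i : n) :
    (A * Bᵀ - B * Aᵀ) i i = 0 := by
  simp [mul_apply, mul_comm]

theorem exists_fromBlocks_mem_symplecticGroup [DecidableEq n] [LinearOrder n]
    (C D A₀ B₀ : Matrix n n R) (hCD : C * Dᵀ = D * Cᵀ) (h₀ : A₀ * Dᵀ - B₀ * Cᵀ = 1) :
    ∃ A B : Matrix n n R, fromBlocks A B C D ∈ symplecticGroup n R := by
  set S := A₀ * B₀ᵀ - B₀ * A₀ᵀ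
  obtain ⟨T, hT⟩ := exists_sub_transpose_eq S (by simp [S, transpose_mul])
    (mul_transpose_sub_mul_transpose_apply_self A₀ B₀)
  have h₀' : D * A₀ᵀ - C * B₀ᵀ = 1 := by simpa [transpose_mul] using congr_arg transpose h₀
  refine ⟨A₀ + T * C, B₀ + T * D, ?_⟩
  rw [← SymplecticGroup.transpose_mem_iff, fromBlocks_transpose,
    SymplecticGroup.fromBlocks_mem_iff]
  simp only [transpose_transpose]
  refine ⟨?_, hCD, ?_⟩
  · rw [← sub_eq_zero]
    calc (A₀ + T * C) * (B₀ + T * D)ᵀ - (B₀ + T * D) * (A₀ + T * C)ᵀ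
        = S + (A₀ * Dᵀ - B₀ * Cᵀ) * Tᵀ - T * (D * A₀ᵀ - C * B₀ᵀ)
          + T * (C * Dᵀ - D * Cᵀ) * Tᵀ := by
          simp only [S, transpose_add, transpose_mul]; noncomm_ring
      _ = 0 := by rw [h₀, h₀', hCD, ← hT]; noncomm_ring
  · calc (A₀ + T * C) * Dᵀ - (B₀ + T * D) * Cᵀ
        = (A₀ * Dᵀ - B₀ * Cᵀ) + T * (C * Dᵀ - D * Cᵀ) := by noncomm_ring
      _ = 1 := by rw [h₀, hCD, sub_self, Matrix.mul_zero, add_zero]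

end Matrix

theorem isSp4_iff_mem_symplecticGroup (γ : Matrix (Fin 2 ⊕ Fin 2) (Fin 2 ⊕ Fin 2) ℤ) :
    IsSp4 γ ↔ γ ∈ symplecticGroup (Fin 2) ℤ := by
  have hJ : Jmat = -J (Fin 2) ℤ := by simp [Jmat, J, fromBlocks_neg]
  rw [IsSp4, SymplecticGroup.mem_iff', hJ, Matrix.mul_neg, Matrix.neg_mul, neg_inj]

theorem concatMod_eq_map_fromCols (p : ℕ) (M N : Matrix (Fin 2) (Fin 2) ℤ) :
    concatMod p M N = (fromCols M N).map ((↑) : ℤ → ZMod p) := by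
  ext i (j | j) <;> rfl

theorem stmt11 (M N : Matrix (Fin 2) (Fin 2) ℤ)
    (hsym : M * Nᵀ = N * Mᵀ)
    (hcop : ∀ p : ℕ, p.Prime → (concatMod p M N).rank = 2) :
    ∃ A B : Matrix (Fin 2) (Fin 2) ℤ, IsSp4 (Matrix.fromBlocks A B M N) := by
  obtain ⟨Q, hQ⟩ := (fromCols M N).exists_mul_eq_one_of_forall_rank_map_eq_two fun p hp =>
    concatMod_eq_map_fromCols p M N ▸ hcop p hp
  rw [← fromRows_toRows Q, fromCols_mul_fromRows] at hQ
  have h₀ : Q.toRows₂ᵀ * Nᵀ - -Q.toRows₁ᵀ * Mᵀ = 1 := by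
    simpa [transpose_mul, add_comm] using congr_arg transpose hQ
  obtain ⟨A, B, hAB⟩ := exists_fromBlocks_mem_symplecticGroup M N _ _ hsym h₀
  exact ⟨A, B, (isSp4_iff_mem_symplecticGroup _).2 hAB⟩
end
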